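/- Let A* be a cochain complex of F-vector spaces whose cohomology H^i(A*) is finite-dimensional in each degree and vanishes for all sufficiently large i. Then the canonical double-dual chain map f : A* → Hom*(Hom*(A*,F),F), f(x)(α) = (−1)^{|α|} α(x), is a quasi-isomorphism, i.e. it induces an isomorphism on cohomology in every degree. -/
import Mathlib

section Aux

variable {F : Type*} [Field F]

private lemma negOnePow_smul_smul {M : Type*} [AddCommGroup M] (n : ℤ) (v : M) :
    (Int.negOnePow n : ℤ) • (Int.negOnePow n : ℤ) • v = v := by
  rw [smul_smul, ← Units.val_mul, Int.units_mul_self, Units.val_one, one_smul]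

private lemma eq_zero_of_negOnePow_smul {M : Type*} [AddCommGroup M] (n : ℤ) (v : M)
    (h : (Int.negOnePow n : ℤ) • v = 0) : v = 0 := by
  rw [← negOnePow_smul_smul n v, h, smul_zero]

/-- Factorization of a linear functional through a linear map over a field. -/
private lemma factor_lemma {V W : Type*} [AddCommGroup V] [Module F V]
    [AddCommGroup W] [Module F W] (u : V →ₗ[F] W) (g : V →ₗ[F] F)
    (h : LinearMap.ker u ≤ LinearMap.ker g) : ∃ ψ : W →ₗ[F] F, ψ ∘ₗ u = g := by
  obtain ⟨σ, hσ⟩ := u.rangeRestrict.exists_rightInverse_of_surjective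
    (LinearMap.range_eq_top.2 u.surjective_rangeRestrict)
  obtain ⟨ψ, hψ⟩ := LinearMap.exists_extend (g ∘ₗ σ)
  refine ⟨ψ, ?_⟩
  ext v
  have h2 : σ (u.rangeRestrict v) - v ∈ LinearMap.ker u := by
    rw [← LinearMap.ker_rangeRestrict]
    rw [LinearMap.mem_ker, map_sub, ← LinearMap.comp_apply, hσ, LinearMap.id_apply, sub_self]
  have h3 : g (σ (u.rangeRestrict v)) = g v := by
    have := h h2
    rw [LinearMap.mem_ker, map_sub, sub_eq_zero] at this
    exact this
  calc ψ (u v) = ψ ((LinearMap.range u).subtype (u.rangeRestrict v)) := rfl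
    _ = (g ∘ₗ σ) (u.rangeRestrict v) := by rw [← LinearMap.comp_apply, hψ]
    _ = g v := h3

/-- If every functional annihilating `U` annihilates `x`, then `x ∈ U`. -/
private lemma mem_of_forall_ann {V : Type*} [AddCommGroup V] [Module F V]
    (U : Submodule F V) (x : V)
    (h : ∀ α : Module.Dual F V, (∀ u, u ∈ U → α u = 0) → α x = 0) : x ∈ U := by
  rw [← Submodule.Quotient.mk_eq_zero U,
    ← Module.forall_dual_apply_eq_zero_iff F (Submodule.Quotient.mk x)]
  intro φ
  have := h (φ ∘ₗ U.mkQ) ?_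
  · simpa using this
  · intro u hu
    simp [LinearMap.comp_apply, (Submodule.Quotient.mk_eq_zero U).2 hu]

end Aux

set_option maxHeartbeats 4000000 in
/-- Let `A*` be a cochain complex of `F`-vector spaces whose cohomology
`H^i(A*)` is finite-dimensional in each degree and vanishes for all sufficiently large `i`.
Then the canonical double-dual chain map `f : A* → Hom*(Hom*(A*,F),F)`,
`f(x)(α) = (-1)^{|α|} α(x)`, is a quasi-isomorphism: it induces an isomorphism on
cohomology in every degree (here expressed elementwise: injectivity and surjectivity of
the induced map on cohomology classes).  `δ` and `D` are the Koszul differentials of the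
dual and double-dual complexes, as in the convention `dφ = -(-1)^{|φ|} φ∘d`. -/
theorem double_dual_quasi_iso
    (F : Type*) [Field F]
    (A : ℤ → Type*) [∀ i, AddCommGroup (A i)] [∀ i, Module F (A i)]
    (d : ∀ i j : ℤ, A i →ₗ[F] A j)
    (hshape : ∀ i j : ℤ, j ≠ i + 1 → d i j = 0)
    (hdd : ∀ i j k : ℤ, d j k ∘ₗ d i j = 0)
    (δ : ∀ i : ℤ, Module.Dual F (A (i + 1)) →ₗ[F] Module.Dual F (A i))
    (hδ : ∀ (i : ℤ) (α : Module.Dual F (A (i + 1))),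
      δ i α = -((Int.negOnePow (-(i + 1)) : ℤ) • (α ∘ₗ d i (i + 1))))
    (D : ∀ i : ℤ, Module.Dual F (Module.Dual F (A i)) →ₗ[F]
      Module.Dual F (Module.Dual F (A (i + 1))))
    (hD : ∀ (i : ℤ) (Φ : Module.Dual F (Module.Dual F (A i))),
      D i Φ = -((Int.negOnePow i : ℤ) • (Φ ∘ₗ δ i)))
    (f : ∀ i : ℤ, A i → Module.Dual F (Module.Dual F (A i)))
    (hf : ∀ (i : ℤ) (x : A i) (α : Module.Dual F (A i)),
      f i x α = (Int.negOnePow (-i) : ℤ) • α x)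
    -- `H^{i+1}(A*)` is finite-dimensional for every `i`:
    (hfin : ∀ i : ℤ, FiniteDimensional F
      (↥(LinearMap.ker (d (i + 1) (i + 2))) ⧸
        (LinearMap.range (d i (i + 1))).comap (LinearMap.ker (d (i + 1) (i + 2))).subtype))
    -- `H^i(A*) = 0` for all sufficiently large `i`:
    (hvan : ∃ N : ℤ, ∀ i : ℤ, N ≤ i →
      LinearMap.ker (d i (i + 1)) ≤ LinearMap.range (d (i - 1) i)) :
    -- injectivity on cohomology:
    (∀ (i : ℤ) (x : A (i + 1)), d (i + 1) (i + 2) x = 0 →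
      (∃ Ψ : Module.Dual F (Module.Dual F (A i)), D i Ψ = f (i + 1) x) →
      ∃ w : A i, d i (i + 1) w = x)
    -- surjectivity on cohomology:
    ∧ (∀ (i : ℤ) (Φ : Module.Dual F (Module.Dual F (A (i + 1)))),
      D (i + 1) Φ = 0 →
      ∃ (x : A (i + 1)) (Ψ : Module.Dual F (Module.Dual F (A i))),
        d (i + 1) (i + 2) x = 0 ∧ f (i + 1) x - Φ = D i Ψ) := by
  constructor
  · -- injectivity on cohomology
    rintro i x _hx ⟨Ψ, hΨ⟩
    have key : ∀ α : Module.Dual F (A (i + 1)),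
        (∀ u, u ∈ LinearMap.range (d i (i + 1)) → α u = 0) → α x = 0 := by
      intro α hα
      have hcomp : α ∘ₗ d i (i + 1) = 0 := by
        ext y; exact hα _ ⟨y, rfl⟩
      have hδα : δ i α = 0 := by rw [hδ, hcomp, smul_zero, neg_zero]
      have h1 : f (i + 1) x α = 0 := by
        rw [← hΨ, hD]
        simp [hδα]
      rw [hf] at h1
      exact eq_zero_of_negOnePow_smul _ _ h1
    exact mem_of_forall_ann _ x key
  · -- surjectivity on cohomology
    intro i Φ hΦ
    set Z : Submodule F (A (i + 1)) := LinearMap.ker (d (i + 1) (i + 2)) with hZdef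
    set B' : Submodule F Z := (LinearMap.range (d i (i + 1))).comap Z.subtype with hB'def
    haveI : FiniteDimensional F (Z ⧸ B') := hfin i
    -- Φ kills everything of the form β ∘ d
    have hΦd : ∀ β : Module.Dual F (A (i + 2)), Φ (β ∘ₗ d (i + 1) (i + 2)) = 0 := by
      have h0 : Φ ∘ₗ δ (i + 1) = 0 := by
        rw [hD] at hΦ
        rw [neg_eq_zero] at hΦ
        exact eq_zero_of_negOnePow_smul _ _ hΦ
      have hraw : ∀ β : Module.Dual F (A (i + 1 + 1)),
          Φ (β ∘ₗ d (i + 1) (i + 1 + 1)) = 0 := by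
        intro β
        have h1 : Φ (δ (i + 1) β) = 0 := by
          rw [← LinearMap.comp_apply, h0]; rfl
        rw [hδ, map_neg, neg_eq_zero, map_zsmul] at h1
        exact eq_zero_of_negOnePow_smul _ _ h1
      have e : i + 1 + 1 = i + 2 := by ring
      rw [e] at hraw
      exact hraw
    -- the annihilator of B = range (d i (i+1))
    set annB : Submodule F (Module.Dual F (A (i + 1))) :=
      LinearMap.ker ((d i (i + 1)).dualMap) with hannBdef
    have hmem_annB : ∀ α : Module.Dual F (A (i + 1)),
        α ∈ annB ↔ α ∘ₗ d i (i + 1) = 0 := by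
      intro α
      rw [hannBdef, LinearMap.mem_ker, LinearMap.dualMap_apply']
    have hB'le : ∀ α : ↥annB,
        B' ≤ LinearMap.ker ((α : Module.Dual F (A (i + 1))) ∘ₗ Z.subtype) := by
      rintro α z hz
      obtain ⟨w, hw⟩ := hz
      have hc : (α : Module.Dual F (A (i + 1))) ∘ₗ d i (i + 1) = 0 := (hmem_annB _).1 α.2
      have hv : (α : Module.Dual F (A (i + 1))) (Z.subtype z) = 0 := by
        rw [← hw, ← LinearMap.comp_apply, hc, LinearMap.zero_apply]
      exact LinearMap.mem_ker.mpr hv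
    -- restriction to Z descends to the cohomology quotient
    let ρ : ↥annB →ₗ[F] Module.Dual F (Z ⧸ B') :=
      { toFun := fun α => B'.liftQ ((α : Module.Dual F (A (i + 1))) ∘ₗ Z.subtype) (hB'le α)
        map_add' := by
          intro a b
          apply Submodule.linearMap_qext
          rw [Submodule.liftQ_mkQ, LinearMap.add_comp, Submodule.liftQ_mkQ,
            Submodule.liftQ_mkQ, Submodule.coe_add, LinearMap.add_comp]
        map_smul' := by
          intro c a
          apply Submodule.linearMap_qext
          rw [Submodule.liftQ_mkQ, RingHom.id_apply, LinearMap.smul_comp,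
            Submodule.liftQ_mkQ, Submodule.coe_smul, LinearMap.smul_comp] }
    have hρ_apply : ∀ (α : ↥annB) (zz : Z),
        ρ α (Submodule.Quotient.mk zz) = (α : Module.Dual F (A (i + 1))) zz :=
      fun α zz => Submodule.liftQ_apply _ _ zz
    -- the functional induced by Φ on the annihilator of B, with sign
    let lam : ↥annB →ₗ[F] F :=
      ((Int.negOnePow (i + 1) : ℤ) : F) • (Φ ∘ₗ annB.subtype)
    have hlamapply : ∀ α : ↥annB,
        lam α = ((Int.negOnePow (i + 1) : ℤ) : F) * Φ (α : Module.Dual F (A (i + 1))) :=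
      fun α => rfl
    have hkerle : LinearMap.ker ρ ≤ LinearMap.ker lam := by
      intro α hα0
      rw [LinearMap.mem_ker] at hα0 ⊢
      -- α vanishes on Z
      have hZker : LinearMap.ker (d (i + 1) (i + 2)) ≤
          LinearMap.ker (α : Module.Dual F (A (i + 1))) := by
        intro z hz
        have h4 : ρ α (Submodule.Quotient.mk (⟨z, hz⟩ : Z)) = 0 := by rw [hα0]; rfl
        rw [hρ_apply] at h4
        exact LinearMap.mem_ker.mpr h4
      obtain ⟨β, hβ⟩ := factor_lemma (d (i + 1) (i + 2))
        (α : Module.Dual F (A (i + 1))) hZker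
      have hΦα : Φ (α : Module.Dual F (A (i + 1))) = 0 := by
        rw [← hβ]; exact hΦd β
      rw [hlamapply, hΦα, mul_zero]
    obtain ⟨lbar, hlbar⟩ := factor_lemma (F := F) (V := ↥annB) (W := Module.Dual F (Z ⧸ B')) ρ lam hkerle
    -- use reflexivity of the finite-dimensional cohomology
    let h0 : Z ⧸ B' := (Module.evalEquiv F (Z ⧸ B')).symm lbar
    have hval : ∀ β : Module.Dual F (Z ⧸ B'), β h0 = lbar β := fun β =>
      Module.apply_evalEquiv_symm_apply F (Z ⧸ B') β lbar
    obtain ⟨z, hzQ⟩ := Submodule.Quotient.mk_surjective B' h0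
    -- the key identity: for α annihilating B, α z = ±Φ(α)
    have hkey : ∀ α : Module.Dual F (A (i + 1)), α ∈ annB →
        α (z : A (i + 1)) = ((Int.negOnePow (i + 1) : ℤ) : F) * Φ α := by
      intro α hα
      have h1 : ρ ⟨α, hα⟩ h0 = lbar (ρ ⟨α, hα⟩) := hval (ρ ⟨α, hα⟩)
      have h2 : lbar (ρ ⟨α, hα⟩) = lam ⟨α, hα⟩ := by rw [← hlbar]; rfl
      have h3 : ρ ⟨α, hα⟩ h0 = α (z : A (i + 1)) := by
        rw [← hzQ, hρ_apply]
      rw [← h3, h1, h2, hlamapply]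
    -- build Ψ by factoring through δ i
    set G : Module.Dual F (Module.Dual F (A (i + 1))) :=
      -((Int.negOnePow i : ℤ) • (f (i + 1) (z : A (i + 1)) - Φ)) with hGdef
    have hGker : LinearMap.ker (δ i) ≤ LinearMap.ker G := by
      intro α hα
      rw [LinearMap.mem_ker] at hα ⊢
      have hαB : α ∈ annB := by
        rw [hmem_annB]
        rw [hδ, neg_eq_zero] at hα
        exact eq_zero_of_negOnePow_smul _ _ hα
      have hzero : (f (i + 1) (z : A (i + 1)) - Φ) α = 0 := by
        have hfz : f (i + 1) (z : A (i + 1)) α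
            = (Int.negOnePow (-(i + 1)) : ℤ) • α (z : A (i + 1)) := hf (i + 1) _ α
        rw [LinearMap.sub_apply, hfz, hkey α hαB, sub_eq_zero, Int.negOnePow_neg,
          ← Int.cast_smul_eq_zsmul F, smul_eq_mul, ← mul_assoc, ← Int.cast_mul,
          ← Units.val_mul, Int.units_mul_self, Units.val_one, Int.cast_one, one_mul]
      rw [hGdef, LinearMap.neg_apply, LinearMap.smul_apply, hzero, smul_zero, neg_zero]
    obtain ⟨Ψ, hΨ⟩ := factor_lemma (δ i) G hGker
    refine ⟨(z : A (i + 1)), Ψ, z.2, ?_⟩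
    rw [hD, hΨ, hGdef, smul_neg, neg_neg, negOnePow_smul_smul]
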